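/- arXiv:1505.05246 — 2 statements merged into one kernel-verified Lean document; each statement's English description precedes it below -/
import Mathlib

section
/- For every even integer $n \geq 4$, $\sum_{k=1}^{n/2 - 1} (-1)^{k+1} \frac{\cos^2(k\pi/n)}{\sin(k\pi/n)} > 0$. -/
open Real Finset

lemma alt_sum_pos (m : ℕ) : ∀ a : ℕ → ℝ, 1 ≤ m →
    (∀ k, 1 ≤ k → k ≤ m → 0 < a k) →
    (∀ k, 1 ≤ k → k + 1 ≤ m → a (k + 1) < a k) →
    0 < ∑ k ∈ Finset.Icc 1 m, (-1 : ℝ) ^ (k + 1) * a k := by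
  induction m using Nat.strong_induction_on with
  | _ m ih =>
    intro a hm hpos hdec
    match m, hm with
    | 1, _ =>
      simp only [Finset.Icc_self, Finset.sum_singleton]
      simpa using hpos 1 le_rfl le_rfl
    | 2, _ =>
      have h : Finset.Icc 1 2 = {1, 2} := by decide
      rw [h]
      have h1 := hpos 1 (by norm_num) (by norm_num)
      have h2 := hdec 1 le_rfl le_rfl
      rw [Finset.sum_pair (by norm_num)]
      norm_num
      nlinarith
    | (m + 3), _ =>
      set f : ℕ → ℝ := fun k => (-1 : ℝ) ^ (k + 1) * a k with hf
      have hsplit : ∑ k ∈ Finset.Ioc 0 2, f k + ∑ k ∈ Finset.Ioc 2 (m + 3), f k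
          = ∑ k ∈ Finset.Ioc 0 (m + 3), f k :=
        Finset.sum_Ioc_consecutive f (by omega) (by omega)
      have hIcc : Finset.Icc 1 (m + 3) = Finset.Ioc 0 (m + 3) := by
        ext x; simp [Nat.lt_iff_add_one_le]
      have hmap : Finset.Ioc 2 (m + 3) = Finset.map (addLeftEmbedding 2) (Finset.Ioc 0 (m + 1)) := by
        rw [Finset.map_add_left_Ioc]
        congr 1 <;> omega
      have htail : ∑ k ∈ Finset.Ioc 2 (m + 3), f k
          = ∑ j ∈ Finset.Icc 1 (m + 1), (-1 : ℝ) ^ (j + 1) * a (j + 2) := by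
        rw [hmap, Finset.sum_map]
        have : Finset.Ioc 0 (m + 1) = Finset.Icc 1 (m + 1) := by
          ext x; simp [Nat.lt_iff_add_one_le]
        rw [this]
        apply Finset.sum_congr rfl
        intro j _
        simp only [addLeftEmbedding_apply, hf]
        have h1 : 2 + j = j + 2 := by ring
        rw [h1]
        have : (-1 : ℝ) ^ (j + 2 + 1) = (-1 : ℝ) ^ (j + 1) := by
          rw [show j + 2 + 1 = (j + 1) + 2 by ring, pow_add]; norm_num
        rw [this]
      have hT : 0 < ∑ j ∈ Finset.Icc 1 (m + 1), (-1 : ℝ) ^ (j + 1) * a (j + 2) := by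
        apply ih (m + 1) (by omega) (fun j => a (j + 2)) (by omega)
        · intro k hk1 hk2; exact hpos (k + 2) (by omega) (by omega)
        · intro k hk1 hk2
          have := hdec (k + 2) (by omega) (by omega)
          simpa using this
      have hhead : ∑ k ∈ Finset.Ioc 0 2, f k = a 1 - a 2 := by
        have h : Finset.Ioc 0 2 = {1, 2} := by decide
        rw [h]
        simp [hf]
        ring
      have hhd : 0 < a 1 - a 2 := by
        have := hdec 1 le_rfl (by omega)
        linarith
      rw [hIcc, ← hsplit, hhead, htail]
      linarith

theorem alternating_cos_sq_sum_pos (n : ℕ) (hn : 4 ≤ n) (heven : Even n) :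
    0 < ∑ k ∈ Finset.Icc 1 (n / 2 - 1),
        (-1 : ℝ) ^ (k + 1) * Real.cos (k * π / n) ^ 2 / Real.sin (k * π / n) := by
  have hnpos : (0 : ℝ) < n := by positivity
  -- bounds on x_k
  have hx : ∀ k : ℕ, 1 ≤ k → k ≤ n / 2 - 1 →
      0 < (k : ℝ) * π / n ∧ (k : ℝ) * π / n < π / 2 := by
    intro k hk1 hk2
    constructor
    · have : (1 : ℝ) ≤ k := by exact_mod_cast hk1
      positivity
    · rw [div_lt_div_iff₀ hnpos (by norm_num : (0:ℝ) < 2)]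
      have h2k : 2 * k < n := by
        obtain ⟨t, ht⟩ := heven
        omega
      have : (2 * k : ℝ) < n := by exact_mod_cast h2k
      nlinarith [Real.pi_pos]
  have key : 0 < ∑ k ∈ Finset.Icc 1 (n / 2 - 1),
      (-1 : ℝ) ^ (k + 1) * (Real.cos (k * π / n) ^ 2 / Real.sin (k * π / n)) := by
    apply alt_sum_pos (n / 2 - 1) _ (by omega)
    · intro k hk1 hk2
      obtain ⟨h0, h1⟩ := hx k hk1 hk2
      have hs : 0 < Real.sin ((k : ℝ) * π / n) :=
        Real.sin_pos_of_pos_of_lt_pi h0 (by linarith [Real.pi_pos])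
      have hc : 0 < Real.cos ((k : ℝ) * π / n) :=
        Real.cos_pos_of_mem_Ioo ⟨by linarith [Real.pi_pos], h1⟩
      positivity
    · intro k hk1 hk2
      obtain ⟨h0, h1⟩ := hx k hk1 (by omega)
      obtain ⟨h0', h1'⟩ := hx (k + 1) (by omega) hk2
      have hlt : (k : ℝ) * π / n < ((k : ℝ) + 1) * π / n := by
        apply div_lt_div_of_pos_right _ hnpos
        nlinarith [Real.pi_pos]
      have hcast : ((k + 1 : ℕ) : ℝ) = (k : ℝ) + 1 := by push_cast; ring
      rw [hcast]
      have hs : 0 < Real.sin ((k : ℝ) * π / n) :=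
        Real.sin_pos_of_pos_of_lt_pi h0 (by linarith [Real.pi_pos])
      have hs' : 0 < Real.sin (((k : ℝ) + 1) * π / n) := by
        rw [hcast] at h0' h1'
        exact Real.sin_pos_of_pos_of_lt_pi h0' (by linarith [Real.pi_pos])
      rw [hcast] at h0' h1'
      have hc' : 0 < Real.cos (((k : ℝ) + 1) * π / n) :=
        Real.cos_pos_of_mem_Ioo ⟨by linarith [Real.pi_pos], h1'⟩
      have hcos : Real.cos (((k : ℝ) + 1) * π / n) < Real.cos ((k : ℝ) * π / n) :=
        Real.cos_lt_cos_of_nonneg_of_le_pi (le_of_lt h0) (by linarith [Real.pi_pos]) hlt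
      have hsin : Real.sin ((k : ℝ) * π / n) < Real.sin (((k : ℝ) + 1) * π / n) :=
        Real.sin_lt_sin_of_lt_of_le_pi_div_two (by linarith) (le_of_lt h1') hlt
      calc Real.cos (((k : ℝ) + 1) * π / n) ^ 2 / Real.sin (((k : ℝ) + 1) * π / n)
          < Real.cos ((k : ℝ) * π / n) ^ 2 / Real.sin (((k : ℝ) + 1) * π / n) := by
            apply div_lt_div_of_pos_right _ hs'
            nlinarith
        _ ≤ Real.cos ((k : ℝ) * π / n) ^ 2 / Real.sin ((k : ℝ) * π / n) := by
            apply div_le_div_of_nonneg_left (by positivity) hs (le_of_lt hsin)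
  calc (0:ℝ) < _ := key
    _ = _ := by
      apply Finset.sum_congr rfl
      intro k _
      ring
end

section
/- For all integers $j \geq 7$, $\mathbf{g}_1(j,2) = -\frac{j}{2} + \sum_{k=1}^{j-1}\left(\frac{1}{2\sin(k\pi/j)} - \frac{1}{4}\sin\frac{k\pi}{j}\right) > 0$, while $\mathbf{g}_1(6,2) < 0$. -/
open Real Finset

/-!
The summand is `φ (sin (k * π / j))` with `φ s = 1 / (2 * s) - s / 4`, which is decreasing for
`s > 0` and at least `1 / 4` for `s ≤ 1`. By the symmetry `k ↦ j - k`, the sum is at least twice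
the terms `k = 1, 2, 3` plus `(j - 7) / 4` for the middle terms. For `j ≥ 8`, the inequality
`1 / sin x ≥ 1 / x + x / 6` bounds the three terms below by `(11 / 12) (j / π) - π / j`, which is
enough. For `j = 7` the margin is only about `0.014`, so we use `sin x ≤ x - x³/6 + x⁵/120`
together with `π < 3.1416`. For `j = 6` the sines are `1/2`, `√3/2` and `1`.
-/

theorem cos_le_one_sub_sq_div_two_add_pow_four (x : ℝ) : cos x ≤ 1 - x ^ 2 / 2 + x ^ 4 / 24 := by
  wlog hx : 0 ≤ x
  · simpa [Even.neg_pow (by decide : Even 2), Even.neg_pow (by decide : Even 4)] using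
      this (-x) (by linarith)
  let f (t : ℝ) : ℝ := 1 - t ^ 2 / 2 + t ^ 4 / 24 - cos t
  have hderiv (t : ℝ) : deriv f t = sin t - (t - t ^ 3 / 6) := by
    simp (disch := fun_prop) [f]
    ring
  have hmono : MonotoneOn f (Set.Ici 0) := by
    apply monotoneOn_of_deriv_nonneg (convex_Ici 0) (by fun_prop) (by fun_prop)
    intro t ht
    rw [interior_Ici] at ht
    rw [hderiv]
    linarith [sin_ge_sub_cube (le_of_lt ht)]
  simpa [f] using hmono Set.self_mem_Ici hx hx

theorem sin_le_sub_cube_add_pow_five {x : ℝ} (hx : 0 ≤ x) :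
    sin x ≤ x - x ^ 3 / 6 + x ^ 5 / 120 := by
  let f (t : ℝ) : ℝ := t - t ^ 3 / 6 + t ^ 5 / 120 - sin t
  have hderiv (t : ℝ) : deriv f t = 1 - t ^ 2 / 2 + t ^ 4 / 24 - cos t := by
    simp (disch := fun_prop) [f]
    ring
  have hmono : MonotoneOn f (Set.Ici 0) := by
    apply monotoneOn_of_deriv_nonneg (convex_Ici 0) (by fun_prop) (by fun_prop)
    intro t _
    rw [hderiv]
    linarith [cos_le_one_sub_sq_div_two_add_pow_four t]
  simpa [f] using hmono Set.self_mem_Ici hx hx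

theorem inv_add_div_six_le_inv_sin {x : ℝ} (hx0 : 0 < x) (hxπ : x < π) :
    1 / x + x / 6 ≤ 1 / sin x := by
  have hsin : 0 < sin x := sin_pos_of_pos_of_lt_pi hx0 hxπ
  have hx14 : x ^ 2 ≤ 14 := by nlinarith [pi_lt_d2]
  have : sin x * (6 + x ^ 2) ≤ 6 * x := by
    have := sin_le_sub_cube_add_pow_five hx0.le
    nlinarith [mul_nonneg (pow_pos hx0 5).le (sub_nonneg.2 hx14),
      mul_le_mul_of_nonneg_right this (by positivity : (0 : ℝ) ≤ 6 + x ^ 2)]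
  rw [div_add_div _ _ hx0.ne' (by norm_num), div_le_div_iff₀ (by positivity) hsin]
  nlinarith

noncomputable def halfInvSubQuarter (s : ℝ) : ℝ := 1 / (2 * s) - 1 / 4 * s

theorem halfInvSubQuarter_antitoneOn : AntitoneOn halfInvSubQuarter (Set.Ioi 0) := by
  intro s hs u _ hsu
  have h : 1 / (2 * u) ≤ 1 / (2 * s) := by
    gcongr
    exact mul_pos two_pos hs
  simp only [halfInvSubQuarter]
  linarith

theorem quarter_le_halfInvSubQuarter {s : ℝ} (hs0 : 0 < s) (hs1 : s ≤ 1) :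
    1 / 4 ≤ halfInvSubQuarter s := by
  have : halfInvSubQuarter s - 1 / 4 = (1 - s) * (2 + s) / (4 * s) := by
    simp only [halfInvSubQuarter]; field_simp; ring
  have : 0 ≤ (1 - s) * (2 + s) / (4 * s) := by
    apply div_nonneg <;> nlinarith
  linarith

theorem sum_Ico_one_eq_sum_ends_add_sum_middle {M : Type*} [AddCommMonoid M] (f : ℕ → M)
    {m j : ℕ} (h : 2 * m < j) :
    ∑ k ∈ Ico 1 j, f k =
      ∑ k ∈ Ico 1 (m + 1), (f k + f (j - k)) + ∑ k ∈ Ico (m + 1) (j - m), f k := by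
  rw [sum_add_distrib, sum_Ico_reflect f 1 (by omega), add_right_comm,
    sum_Ico_consecutive f (by omega) (by omega), Nat.add_sub_add_right, Nat.add_sub_cancel,
    sum_Ico_consecutive f (by omega) (by omega)]

theorem sin_natCast_mul_pi_div_pos {k j : ℕ} (hk : 0 < k) (hkj : k < j) :
    0 < sin (k * π / j) := by
  have hk' : (0 : ℝ) < k := by exact_mod_cast hk
  have hkj' : (k : ℝ) < j := by exact_mod_cast hkj
  apply sin_pos_of_pos_of_lt_pi (div_pos (mul_pos hk' pi_pos) (by linarith))
  rw [div_lt_iff₀ (by linarith)]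
  nlinarith [pi_pos]

theorem sin_natCast_sub_mul_pi_div {k j : ℕ} (hkj : k ≤ j) :
    sin ((j - k : ℕ) * π / j) = sin (k * π / j) := by
  rcases Nat.eq_zero_or_pos j with rfl | hj
  · simp
  rw [Nat.cast_sub hkj, sub_mul, sub_div, mul_div_cancel_left₀ _ (by positivity : (j : ℝ) ≠ 0),
    sin_pi_sub]

theorem halfInvSubQuarter_sin_ge {x : ℝ} (hx0 : 0 < x) (hxπ : x < π) :
    1 / (2 * x) - x / 6 ≤ halfInvSubQuarter (sin x) := by
  have hinv := inv_add_div_six_le_inv_sin hx0 hxπ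
  have hsin := sin_le hx0.le
  have half (t : ℝ) : 1 / (2 * t) = 1 / t / 2 := by rw [div_div, mul_comm]
  simp only [halfInvSubQuarter, half]
  linarith

theorem halfInvSubQuarter_sin_ge_of_le {x q : ℝ} (hx0 : 0 < x) (hxq : x ≤ q) (hq : q ≤ π / 2) :
    halfInvSubQuarter (q - q ^ 3 / 6 + q ^ 5 / 120) ≤ halfInvSubQuarter (sin x) := by
  have hsin : 0 < sin x := sin_pos_of_pos_of_lt_pi hx0 (by linarith [pi_pos])
  have hle : sin x ≤ q - q ^ 3 / 6 + q ^ 5 / 120 :=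
    (sin_le_sin_of_le_of_le_pi_div_two (by linarith [pi_pos]) hq hxq).trans
      (sin_le_sub_cube_add_pow_five (by linarith))
  exact halfInvSubQuarter_antitoneOn hsin (hsin.trans_le hle) hle

noncomputable def g1Two (j : ℕ) : ℝ :=
  -(j : ℝ) / 2 + ∑ k ∈ Icc 1 (j - 1), halfInvSubQuarter (sin (k * π / j))

theorem g1Two_ge_two_mul_sum_first_three {j : ℕ} (hj : 7 ≤ j) :
    -((j : ℝ) + 7) / 4 + 2 * ∑ k ∈ Ico (1 : ℕ) 4, halfInvSubQuarter (sin (k * π / j)) ≤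
      g1Two j := by
  rw [g1Two]
  set T : ℕ → ℝ := fun k => halfInvSubQuarter (sin (k * π / j))
  have hIcc : Icc 1 (j - 1) = Ico 1 j := by ext; simp only [mem_Icc, mem_Ico]; omega
  have hends : ∀ k ∈ Ico 1 4, T k + T (j - k) = 2 * T k := by
    intro k hk
    have hkj : k ≤ j := by have := mem_Ico.1 hk; omega
    simp only [T, sin_natCast_sub_mul_pi_div hkj]
    ring
  have hmiddle : ((j : ℝ) - 7) / 4 ≤ ∑ k ∈ Ico 4 (j - 3), T k := by
    have := card_nsmul_le_sum (Ico 4 (j - 3)) T (1 / 4) fun k hk =>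
      have ⟨hk4, hkj⟩ := mem_Ico.1 hk
      quarter_le_halfInvSubQuarter
        (sin_natCast_mul_pi_div_pos (by omega) (by omega)) (sin_le_one _)
    rw [Nat.card_Ico, nsmul_eq_mul, Nat.cast_sub (by omega), Nat.cast_sub (by omega)] at this
    push_cast at this
    linarith
  rw [hIcc, sum_Ico_one_eq_sum_ends_add_sum_middle T (m := 3) (j := j) (by omega),
    sum_congr rfl hends, ← mul_sum]
  linarith

theorem seven_div_two_lt_two_mul_sum_first_three_at_seven :
    7 / 2 < 2 * ∑ k ∈ Ico (1 : ℕ) 4, halfInvSubQuarter (sin (k * π / 7)) := by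
  have hpi := pi_lt_d4
  have hterm (k : ℕ) (hk0 : 0 < k) (hk3 : k ≤ 3) :
      halfInvSubQuarter (k * 3.1416 / 7 - (k * 3.1416 / 7) ^ 3 / 6 + (k * 3.1416 / 7) ^ 5 / 120)
        ≤ halfInvSubQuarter (sin (k * π / 7)) := by
    have hk0' : (0 : ℝ) < k := by exact_mod_cast hk0
    have hk3' : (k : ℝ) ≤ 3 := by exact_mod_cast hk3
    apply halfInvSubQuarter_sin_ge_of_le (by positivity)
    · gcongr
    · nlinarith [pi_gt_three]
  simp only [sum_Ico_eq_sum_range, sum_range_succ, sum_range_zero]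
  have h1 := hterm 1 (by norm_num) (by norm_num)
  have h2 := hterm 2 (by norm_num) (by norm_num)
  have h3 := hterm 3 (by norm_num) (by norm_num)
  norm_num [halfInvSubQuarter] at h1 h2 h3 ⊢
  linarith

theorem add_seven_div_four_lt_two_mul_sum_first_three_of_eight_le {j : ℕ} (hj : 8 ≤ j) :
    ((j : ℝ) + 7) / 4 < 2 * ∑ k ∈ Ico (1 : ℕ) 4, halfInvSubQuarter (sin (k * π / j)) := by
  have hj' : (8 : ℝ) ≤ j := by exact_mod_cast hj
  have hterm (k : ℕ) (hk0 : 0 < k) (hk3 : k ≤ 3) :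
      j / π / (2 * k) - k * (π / j) / 6 ≤ halfInvSubQuarter (sin (k * π / j)) := by
    have hk0' : (0 : ℝ) < k := by exact_mod_cast hk0
    have hk3' : (k : ℝ) ≤ 3 := by exact_mod_cast hk3
    convert halfInvSubQuarter_sin_ge (x := k * π / j) (by positivity) ?_ using 1
    · field_simp
    · rw [div_lt_iff₀ (by positivity)]
      nlinarith [pi_pos]
  simp only [sum_Ico_eq_sum_range, sum_range_succ, sum_range_zero]
  have h1 := hterm 1 (by norm_num) (by norm_num)
  have h2 := hterm 2 (by norm_num) (by norm_num)
  have h3 := hterm 3 (by norm_num) (by norm_num)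
  have hy : (j : ℝ) / 3.1416 < j / π := div_lt_div_of_pos_left (by positivity) pi_pos pi_lt_d4
  have hz : π / j ≤ 3.1416 / 8 := div_le_div₀ (by norm_num) pi_lt_d4.le (by norm_num) hj'
  push_cast at h1 h2 h3 ⊢
  norm_num at hy hz
  linarith

theorem g1Two_six_neg : g1Two 6 < 0 := by
  have h2 : sin (2 * π / 6) = √3 / 2 := by rw [← sin_pi_div_three]; ring_nf
  have h3 : sin (3 * π / 6) = 1 := by rw [← sin_pi_div_two]; ring_nf
  have h4 : sin (4 * π / 6) = √3 / 2 := by rw [← sin_pi_div_three, ← sin_pi_sub]; ring_nf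
  have h5 : sin (5 * π / 6) = 1 / 2 := by rw [← sin_pi_div_six, ← sin_pi_sub]; ring_nf
  have hsqrt : 4 / 5 ≤ √3 / 2 := by
    linarith [Real.le_sqrt_of_sq_le (show (8 / 5 : ℝ) ^ 2 ≤ 3 by norm_num)]
  have hmid := halfInvSubQuarter_antitoneOn (by norm_num : (4 / 5 : ℝ) ∈ Set.Ioi 0)
    ((by norm_num : (0 : ℝ) < 4 / 5).trans_le hsqrt) hsqrt
  simp only [g1Two, Nat.cast_ofNat, Nat.add_one_sub_one, Nat.reduceAdd, Nat.one_le_ofNat,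
    sum_Icc_succ_top, Icc_self, sum_singleton, Nat.cast_one, one_mul, sin_pi_div_six, h2, h3, h4,
    h5]
  norm_num [halfInvSubQuarter] at hmid ⊢
  linarith

theorem g1Two_pos {j : ℕ} (hj : 7 ≤ j) : 0 < g1Two j := by
  have hfirst :
      ((j : ℝ) + 7) / 4 < 2 * ∑ k ∈ Ico (1 : ℕ) 4, halfInvSubQuarter (sin (k * π / j)) := by
    rcases hj.eq_or_lt with rfl | hj8
    · push_cast
      linarith [seven_div_two_lt_two_mul_sum_first_three_at_seven]
    · exact add_seven_div_four_lt_two_mul_sum_first_three_of_eight_le hj8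
  linarith [g1Two_ge_two_mul_sum_first_three hj]

theorem g1_two_pos (j : ℕ) (hj : 7 ≤ j) :
    (0 < -(j : ℝ) / 2 + ∑ k ∈ Finset.Icc 1 (j - 1),
        (1 / (2 * Real.sin (k * π / j)) - (1 / 4) * Real.sin (k * π / j))) ∧
    (-(6 : ℝ) / 2 + ∑ k ∈ Finset.Icc (1 : ℕ) (6 - 1),
        (1 / (2 * Real.sin (k * π / 6)) - (1 / 4) * Real.sin (k * π / 6)) < 0) := by
  refine ⟨g1Two_pos hj, ?_⟩
  have h6 := g1Two_six_neg
  rwa [g1Two, Nat.cast_ofNat] at h6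
end
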